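/- Let dim(·|·) be a bivariant Sylvester module rank function for a unital ring R such that for every exact sequence 0 → M₁ → M₂ → M₃ → 0 of R-modules with M₂ and M₃ finitely presented one has dim(M₂) = dim(M₁) + dim(M₃). Then dim(M₁|M₂) = dim(M₁) for all R-modules M₁ ⊆ M₂, and consequently dim(·) is a normalized length function for R. -/

import Mathlib

universe u
open scoped NNReal ENNReal

/-- A bivariant Sylvester module rank function for a unital ring `R`: to each pair of left
`R`-modules `N ⊆ M` (encoded as a submodule `N` of a module `M`) it assigns a value
`d M N ∈ ℝ≥0∞`, thought of as `dim(N|M)`, satisfying isomorphism invariance, normalization,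
direct sum additivity, the two continuity conditions, and additivity. -/
structure BivariantSylvesterRank (R : Type u) [Ring R] where
  d : ∀ (M : Type u) [AddCommGroup M] [Module R M], Submodule R M → ℝ≥0∞
  iso_invariant : ∀ (M N : Type u) [AddCommGroup M] [Module R M] [AddCommGroup N] [Module R N]
      (e : M ≃ₗ[R] N) (p : Submodule R M),
      d M p = d N (p.map (e : M →ₗ[R] N))
  d_zero : d PUnit ⊤ = 0
  d_ring : d R ⊤ = 1
  d_prod : ∀ (M N : Type u) [AddCommGroup M] [Module R M] [AddCommGroup N] [Module R N]
      (p : Submodule R M) (q : Submodule R N),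
      d (M × N) (p.prod q) = d M p + d N q
  continuity_sup : ∀ (M : Type u) [AddCommGroup M] [Module R M] (p : Submodule R M),
      d M p = ⨆ (p' : {p' : Submodule R M // p'.FG ∧ p' ≤ p}), d M p'.1
  continuity_inf : ∀ (M : Type u) [AddCommGroup M] [Module R M] (p : Submodule R M), p.FG →
      d M p = ⨅ (q : {q : Submodule R M // q.FG ∧ p ≤ q}), d q.1 (p.comap q.1.subtype)
  additivity : ∀ (M : Type u) [AddCommGroup M] [Module R M] (p : Submodule R M),
      d M ⊤ = d M p + d (M ⧸ p) ⊤

/-- A normalized length function for a unital ring `R`: an `ℝ≥0∞`-valued function on all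
left `R`-modules with `L(0)=0`, `L(R)=1`, continuity (sup over finitely generated
submodules) and additivity on short exact sequences. -/
def IsNormalizedLengthFunction (R : Type u) [Ring R]
    (L : ∀ (M : Type u) [AddCommGroup M] [Module R M], ℝ≥0∞) : Prop :=
  L PUnit = 0 ∧ L R = 1 ∧
    (∀ (M : Type u) [AddCommGroup M] [Module R M],
      L M = ⨆ (p : {p : Submodule R M // p.FG}), L ↥p.1) ∧
    (∀ (M₁ M₂ M₃ : Type u) [AddCommGroup M₁] [Module R M₁] [AddCommGroup M₂] [Module R M₂]
      [AddCommGroup M₃] [Module R M₃] (f : M₁ →ₗ[R] M₂) (g : M₂ →ₗ[R] M₃),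
      Function.Injective f → Function.Exact f g → Function.Surjective g →
      L M₂ = L M₁ + L M₃)

/-! For `M` finitely presented and `N ⊆ M` finitely generated, additivity of `dim(·|·)` on
`N ⊆ M ↠ M/N` and the hypothesis on the same sequence differ only in their first terms, and
`dim(M/N) < ∞`, so `dim(N|M) = dim(N)`. For `M` finite, take `π : Rⁿ ↠ M` with kernel `K`.
Additivity gives `dim(π⁻¹N | Rⁿ) = dim(K | Rⁿ) + dim(N|M)`. On the other hand, for every finitely
generated `k ⊆ K` lift `N` to a finitely generated `q ⊇ k` inside `π⁻¹N`; continuity from above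
bounds `dim(k|Rⁿ)` by `dim(k|q)`, and the finitely presented case applied to `q ⊆ Rⁿ` yields
`dim(π⁻¹N | Rⁿ) ≥ dim(k|Rⁿ) + dim(N)`, hence `dim(N) ≤ dim(N|M)`. The two continuity axioms then
remove the finiteness assumptions, and the length-function axioms follow. -/

namespace Submodule

variable {R M N : Type*} [Semiring R] [AddCommMonoid M] [Module R M] [AddCommMonoid N]
  [Module R N]

theorem exists_fg_map_eq_of_surjective {f : M →ₗ[R] N} (hf : Function.Surjective f)
    {p : Submodule R N} (hp : p.FG) : ∃ q : Submodule R M, q.FG ∧ q.map f = p := by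
  obtain ⟨s, rfl⟩ := hp
  refine ⟨span R (Function.surjInv hf '' s), fg_span (s.finite_toSet.image _), ?_⟩
  rw [map_span, Set.image_image]
  simp only [Function.surjInv_eq hf, Set.image_id']

theorem FG.comap_subtype {p q : Submodule R M} (hp : p.FG) (hpq : p ≤ q) :
    (p.comap q.subtype).FG :=
  fg_of_fg_map_injective q.subtype q.injective_subtype <| by
    rwa [map_comap_subtype, inf_eq_right.mpr hpq]

end Submodule

namespace BivariantSylvesterRank

open Submodule LinearMap

variable {R : Type u} [Ring R] (dim : BivariantSylvesterRank R)
  {M N P : Type u} [AddCommGroup M] [Module R M] [AddCommGroup N] [Module R N]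
  [AddCommGroup P] [Module R P]

theorem d_top_congr (e : M ≃ₗ[R] N) : dim.d M ⊤ = dim.d N ⊤ := by
  rw [dim.iso_invariant M N e ⊤, Submodule.map_top, LinearEquiv.range]

theorem d_mono {p q : Submodule R M} (hpq : p ≤ q) : dim.d M p ≤ dim.d M q := by
  rw [dim.continuity_sup M p, dim.continuity_sup M q]
  exact iSup_le fun p' => le_iSup_of_le ⟨p'.1, p'.2.1, p'.2.2.trans hpq⟩ le_rfl

theorem d_le_d_top (p : Submodule R M) : dim.d M p ≤ dim.d M ⊤ :=
  dim.d_mono le_top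

theorem d_top_eq_d_ker_add {f : M →ₗ[R] N} (hf : Function.Surjective f) :
    dim.d M ⊤ = dim.d M (ker f) + dim.d N ⊤ := by
  rw [dim.additivity M (ker f), dim.d_top_congr (f.quotKerEquivOfSurjective hf)]

theorem d_top_le_of_surjective {f : M →ₗ[R] N} (hf : Function.Surjective f) :
    dim.d N ⊤ ≤ dim.d M ⊤ :=
  (dim.d_top_eq_d_ker_add hf).symm ▸ le_add_self

theorem d_pi_fin (n : ℕ) : dim.d (Fin n → R) ⊤ = n := by
  induction n with
  | zero =>
    rw [dim.d_top_congr (LinearEquiv.ofSubsingleton _ PUnit.{u + 1}), dim.d_zero, Nat.cast_zero]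
  | succ n ih =>
    rw [← dim.d_top_congr (Fin.consLinearEquiv R fun _ => R), ← prod_top, dim.d_prod,
      dim.d_ring, ih, Nat.cast_succ, add_comm]

theorem d_top_ne_top [Module.Finite R M] : dim.d M ⊤ ≠ ⊤ := by
  obtain ⟨n, f, hf⟩ := Module.Finite.exists_fin' R M
  refine ne_top_of_le_ne_top (ENNReal.natCast_ne_top n) ?_
  exact dim.d_pi_fin n ▸ dim.d_top_le_of_surjective hf

theorem d_ne_top [Module.Finite R M] (p : Submodule R M) : dim.d M p ≠ ⊤ :=
  ne_top_of_le_ne_top dim.d_top_ne_top (dim.d_le_d_top p)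

theorem d_le_d_comap_subtype {p q : Submodule R M} (hp : p.FG) (hq : q.FG) (hpq : p ≤ q) :
    dim.d M p ≤ dim.d q (p.comap q.subtype) := by
  rw [dim.continuity_inf M p hp]
  exact iInf_le_of_le ⟨q, hq, hpq⟩ le_rfl

theorem d_le_d_top_of_fg {p : Submodule R M} (hp : p.FG) : dim.d M p ≤ dim.d p ⊤ :=
  comap_subtype_self p ▸ dim.d_le_d_comap_subtype hp hp le_rfl

theorem d_comap_eq_d_ker_add [Module.Finite R N] {π : M →ₗ[R] N} (hπ : Function.Surjective π)
    (p : Submodule R N) : dim.d M (p.comap π) = dim.d M (ker π) + dim.d N p := by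
  have hquot : Function.Surjective (p.mkQ ∘ₗ π) := p.mkQ_surjective.comp hπ
  -- after adding the finite `dim(N ⧸ p)`, both sides become `dim(M)`
  rw [← ENNReal.add_left_inj (dim.d_top_ne_top (M := N ⧸ p)), add_assoc, ← dim.additivity,
    ← dim.d_top_eq_d_ker_add hπ, dim.d_top_eq_d_ker_add hquot, ker_comp, ker_mkQ]

def AdditiveOnFinitePresentation : Prop :=
  ∀ (M₁ M₂ M₃ : Type u) [AddCommGroup M₁] [Module R M₁] [AddCommGroup M₂] [Module R M₂]
    [AddCommGroup M₃] [Module R M₃] (f : M₁ →ₗ[R] M₂) (g : M₂ →ₗ[R] M₃),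
    Module.FinitePresentation R M₂ → Module.FinitePresentation R M₃ →
    Function.Injective f → Function.Exact f g → Function.Surjective g →
    dim.d M₂ ⊤ = dim.d M₁ ⊤ + dim.d M₃ ⊤

namespace AdditiveOnFinitePresentation

variable {dim} (hdim : dim.AdditiveOnFinitePresentation)
include hdim

theorem d_eq_d_top_of_finitePresentation [Module.FinitePresentation R M] {p : Submodule R M}
    (hp : p.FG) : dim.d M p = dim.d p ⊤ := by
  have : Module.FinitePresentation R (M ⧸ p) :=
    Module.finitePresentation_of_surjective p.mkQ p.mkQ_surjective (by rwa [ker_mkQ])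
  have hadd := hdim p M (M ⧸ p) p.subtype p.mkQ inferInstance inferInstance
    p.injective_subtype (exact_subtype_mkQ p) p.mkQ_surjective
  rwa [dim.additivity M p, ENNReal.add_left_inj dim.d_top_ne_top] at hadd

theorem d_add_d_top_le_d_comap_of_le_ker [Module.FinitePresentation R M] {π : M →ₗ[R] N}
    (hπ : Function.Surjective π) {p : Submodule R N} (hp : p.FG) {k : Submodule R M}
    (hk : k.FG) (hkπ : k ≤ ker π) : dim.d M k + dim.d p ⊤ ≤ dim.d M (p.comap π) := by
  obtain ⟨q, hq, rfl⟩ := exists_fg_map_eq_of_surjective hπ hp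
  set q' := q ⊔ k
  have hmap : q'.map π = q.map π := by
    rw [Submodule.map_sup, le_ker_iff_map.mp hkπ, sup_bot_eq]
  have hker : k.comap q'.subtype ≤ ker (π.submoduleMap q') := fun x hx =>
    Subtype.ext (hkπ hx)
  rw [← hmap]
  calc dim.d M k + dim.d (q'.map π) ⊤
      ≤ dim.d q' (ker (π.submoduleMap q')) + dim.d (q'.map π) ⊤ := by
        gcongr
        exact (dim.d_le_d_comap_subtype hk (hq.sup hk) le_sup_right).trans (dim.d_mono hker)
    _ = dim.d q' ⊤ := (dim.d_top_eq_d_ker_add (π.submoduleMap_surjective q')).symm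
    _ = dim.d M q' := (hdim.d_eq_d_top_of_finitePresentation (hq.sup hk)).symm
    _ ≤ dim.d M ((q'.map π).comap π) := dim.d_mono (le_comap_map π q')

theorem d_ker_add_d_top_le_d_comap [Module.FinitePresentation R M] {π : M →ₗ[R] N}
    (hπ : Function.Surjective π) {p : Submodule R N} (hp : p.FG) :
    dim.d M (ker π) + dim.d p ⊤ ≤ dim.d M (p.comap π) := by
  have : Nonempty {k : Submodule R M // k.FG ∧ k ≤ ker π} := ⟨⟨⊥, fg_bot, bot_le⟩⟩
  rw [dim.continuity_sup M (ker π), ENNReal.iSup_add]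
  exact iSup_le fun k => hdim.d_add_d_top_le_d_comap_of_le_ker hπ hp k.2.1 k.2.2

theorem d_eq_d_top_of_finite [Module.Finite R M] {p : Submodule R M} (hp : p.FG) :
    dim.d M p = dim.d p ⊤ := by
  obtain ⟨n, π, hπ⟩ := Module.Finite.exists_fin' R M
  refine le_antisymm (dim.d_le_d_top_of_fg hp) ?_
  have hle := hdim.d_ker_add_d_top_le_d_comap hπ hp
  rwa [dim.d_comap_eq_d_ker_add hπ, ENNReal.add_le_add_iff_left (dim.d_ne_top _)] at hle

theorem d_eq_d_top_of_fg {p : Submodule R M} (hp : p.FG) : dim.d M p = dim.d p ⊤ := by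
  have hconst (q : {q : Submodule R M // q.FG ∧ p ≤ q}) :
      dim.d q.1 (p.comap q.1.subtype) = dim.d p ⊤ := by
    obtain ⟨q, hq, hpq⟩ := q
    have : Module.Finite R q := Module.Finite.iff_fg.mpr hq
    rw [hdim.d_eq_d_top_of_finite (hp.comap_subtype hpq),
      dim.d_top_congr (comapSubtypeEquivOfLe hpq)]
  have : Nonempty {q : Submodule R M // q.FG ∧ p ≤ q} := ⟨⟨p, hp, le_rfl⟩⟩
  rw [dim.continuity_inf M p hp, iInf_congr hconst, iInf_const]

theorem d_top_le_of_injective [Module.Finite R P] {f : P →ₗ[R] M} (hf : Function.Injective f)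
    {p : Submodule R M} (hfp : range f ≤ p) : dim.d P ⊤ ≤ dim.d M p := by
  rw [dim.d_top_congr (LinearEquiv.ofInjective f hf),
    ← hdim.d_eq_d_top_of_fg (Module.Finite.iff_fg.mp inferInstance)]
  exact dim.d_mono hfp

theorem d_eq_d_top (p : Submodule R M) : dim.d M p = dim.d p ⊤ := by
  apply le_antisymm
  · rw [dim.continuity_sup M p]
    refine iSup_le fun ⟨q, hq, hqp⟩ => ?_
    have : Module.Finite R q := Module.Finite.iff_fg.mpr hq
    rw [hdim.d_eq_d_top_of_fg hq]
    exact hdim.d_top_le_of_injective (inclusion_injective hqp) le_top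
  · rw [dim.continuity_sup p ⊤]
    refine iSup_le fun ⟨q, hq, _⟩ => ?_
    have : Module.Finite R q := Module.Finite.iff_fg.mpr hq
    rw [hdim.d_eq_d_top_of_fg hq]
    refine hdim.d_top_le_of_injective (f := p.subtype ∘ₗ q.subtype)
      (p.injective_subtype.comp q.injective_subtype) ?_
    rw [range_comp, range_subtype]
    exact map_subtype_le p q

theorem d_top_eq_iSup_fg : dim.d M ⊤ = ⨆ p : {p : Submodule R M // p.FG}, dim.d p ⊤ := by
  rw [dim.continuity_sup M ⊤]
  exact (Equiv.subtypeEquivRight fun p => and_iff_left le_top).iSup_congr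
    fun p => (hdim.d_eq_d_top p.1).symm

theorem d_top_eq_add_of_exact {f : M →ₗ[R] N} {g : N →ₗ[R] P} (hf : Function.Injective f)
    (hfg : Function.Exact f g) (hg : Function.Surjective g) :
    dim.d N ⊤ = dim.d M ⊤ + dim.d P ⊤ := by
  rw [dim.d_top_eq_d_ker_add hg, hfg.linearMap_ker_eq, hdim.d_eq_d_top,
    dim.d_top_congr (LinearEquiv.ofInjective f hf)]

end AdditiveOnFinitePresentation

end BivariantSylvesterRank

/-- Let `dim(·|·)` be a bivariant Sylvester module rank function for `R`
such that for every short exact sequence `0 → M₁ → M₂ → M₃ → 0` with `M₂`, `M₃` finitely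
presented one has `dim(M₂) = dim(M₁) + dim(M₃)`. Then `dim(N|M) = dim(N)` for all modules
`N ⊆ M`, and consequently `M ↦ dim(M)` is a normalized length function for `R`. -/
theorem bivariantSylvesterRank_isLengthFunction_of_additive_on_fp (R : Type u) [Ring R]
    (dim : BivariantSylvesterRank R)
    (h : ∀ (M₁ M₂ M₃ : Type u) [AddCommGroup M₁] [Module R M₁] [AddCommGroup M₂]
      [Module R M₂] [AddCommGroup M₃] [Module R M₃]
      (f : M₁ →ₗ[R] M₂) (g : M₂ →ₗ[R] M₃),
      Module.FinitePresentation R M₂ → Module.FinitePresentation R M₃ →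
      Function.Injective f → Function.Exact f g → Function.Surjective g →
      dim.d M₂ ⊤ = dim.d M₁ ⊤ + dim.d M₃ ⊤) :
    (∀ (M : Type u) [AddCommGroup M] [Module R M] (N : Submodule R M),
        dim.d M N = dim.d ↥N ⊤) ∧
      IsNormalizedLengthFunction R (fun M _ _ => dim.d M ⊤) := by
  have hdim : dim.AdditiveOnFinitePresentation := h
  exact ⟨fun M _ _ N => hdim.d_eq_d_top N, dim.d_zero, dim.d_ring,
    fun M _ _ => hdim.d_top_eq_iSup_fg,
    fun M₁ M₂ M₃ _ _ _ _ _ _ f g hf hfg hg => hdim.d_top_eq_add_of_exact hf hfg hg⟩
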